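/- arXiv:1105.2875 — 6 statements merged into one kernel-verified Lean document; each statement's English description precedes it below -/
import Mathlib

section
/- For every v ∈ ℤ^4, the vector -v lies in the orbit {T^k(v) : k ∈ ℕ} of v under T (i.e. every semi-Coxeter orbit for D4 is self-opposite). -/
/-! The matrix of `T` in the standard basis satisfies `M ^ 3 = -1`, so `T ^ 3 v = -v` for every
`v`: the orbit of `v` reaches `-v` after three steps. -/

theorem Module.End.eq_toLinAlgEquiv'_of_apply_single {R n : Type*} [CommSemiring R] [Fintype n]
    [DecidableEq n] {T : Module.End R (n → R)} {M : Matrix n n R}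
    (h : ∀ j, T (Pi.single j 1) = M.col j) : T = Matrix.toLinAlgEquiv' M := by
  rw [← Matrix.toLinAlgEquiv'_toMatrixAlgEquiv' T]
  congr 1
  ext i j
  rw [LinearMap.toMatrixAlgEquiv'_apply, h, Matrix.col_apply]

theorem Module.End.neg_mem_range_pow_apply_of_pow_eq_neg_one {R M : Type*} [Semiring R]
    [AddCommGroup M] [Module R M] {T : Module.End R M} {n : ℕ} (h : T ^ n = -1) (v : M) :
    -v ∈ Set.range (fun k : ℕ => (T ^ k) v) :=
  ⟨n, by simp [h]⟩

def d4SemiCoxeterMatrix : Matrix (Fin 4) (Fin 4) ℤ :=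
  !![-1, 0, 0, -1; 0, -1, 0, -1; 0, 0, -1, -1; 1, 1, 1, 2]

theorem d4SemiCoxeterMatrix_pow_three : d4SemiCoxeterMatrix ^ 3 = -1 := by decide

theorem stmt_4 (T : Module.End ℤ (Fin 4 → ℤ))
    (h1 : T ![1, 0, 0, 0] = ![-1, 0, 0, 1])
    (h2 : T ![0, 1, 0, 0] = ![0, -1, 0, 1])
    (h3 : T ![0, 0, 1, 0] = ![0, 0, -1, 1])
    (h4 : T ![0, 0, 0, 1] = ![-1, -1, -1, 2])
    : ∀ v : Fin 4 → ℤ, -v ∈ Set.range (fun k : ℕ => (T ^ k) v) := by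
  have hT : T = Matrix.toLinAlgEquiv' d4SemiCoxeterMatrix :=
    Module.End.eq_toLinAlgEquiv'_of_apply_single fun j => by
      fin_cases j <;>
        [convert h1 using 2; convert h2 using 2; convert h3 using 2; convert h4 using 2] <;>
        decide
  have hT3 : T ^ 3 = -1 := by
    rw [hT, ← map_pow, d4SemiCoxeterMatrix_pow_three, map_neg, map_one]
  exact Module.End.neg_mem_range_pow_apply_of_pow_eq_neg_one hT3
end

section
/- T^12 is the identity map on ℤ^5. -/
theorem stmt_5 (T : Module.End ℤ (Fin 5 → ℤ))
    (h1 : T ![1, 0, 0, 0, 0] = ![-1, 0, 0, 1, 0])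
    (h2 : T ![0, 1, 0, 0, 0] = ![0, -1, 0, 1, -1])
    (h3 : T ![0, 0, 1, 0, 0] = ![0, 0, -1, 1, 1])
    (h4 : T ![0, 0, 0, 1, 0] = ![-1, -1, -1, 2, 0])
    (h5 : T ![0, 0, 0, 0, 1] = ![0, 1, -1, 0, 1])
    : T ^ 12 = 1 := by
  have key : ∀ v : Fin 5 → ℤ, T v =
      ![-(v 0) - v 3, -(v 1) - v 3 + v 4, -(v 2) - v 3 - v 4,
        v 0 + v 1 + v 2 + 2 * v 3, -(v 1) + v 2 + v 4] := by
    intro v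
    have hv : v = v 0 • ![1, 0, 0, 0, 0] + v 1 • ![0, 1, 0, 0, 0]
        + v 2 • ![0, 0, 1, 0, 0] + v 3 • ![0, 0, 0, 1, 0]
        + v 4 • ![0, 0, 0, 0, 1] := by
      funext i
      fin_cases i <;> simp
    rw [hv, map_add, map_add, map_add, map_add, map_smul, map_smul, map_smul,
      map_smul, map_smul, h1, h2, h3, h4, h5]
    funext i
    fin_cases i <;> simp <;> ring
  have k2 : ∀ v : Fin 5 → ℤ, T (T v) =
      ![-(v 1) - v 2 - v 3, -(v 0) - v 1 - v 3, -(v 0) - v 2 - v 3,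
        v 0 + v 1 + v 2 + v 3, -(v 4)] := by
    intro v
    rw [key, key]
    funext i
    fin_cases i <;> simp <;> ring
  have k4 : ∀ v : Fin 5 → ℤ, T (T (T (T v))) =
      ![v 0 + v 3, v 1 + v 3, v 2 + v 3,
        -(v 0) - v 1 - v 2 - 2 * v 3, v 4] := by
    intro v
    rw [k2, k2]
    funext i
    fin_cases i <;> simp <;> ring
  apply LinearMap.ext
  intro v
  rw [Module.End.pow_apply]
  show T (T (T (T (T (T (T (T (T (T (T (T v))))))))))) = v
  rw [k4, k4, k4]
  funext i
  fin_cases i <;> simp <;> ring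
end

section
/- T^4(-e5) = e5, but the vector e3 = (0,0,1,0,0) does not lie in the orbit {T^k(-e3) : k ∈ ℕ} of -e3 under T. -/
theorem stmt_14 (T : Module.End ℤ (Fin 5 → ℤ))
    (h1 : T ![1, 0, 0, 0, 0] = ![-1, 0, 0, 1, 0])
    (h2 : T ![0, 1, 0, 0, 0] = ![0, -1, 0, 1, 1])
    (h3 : T ![0, 0, 1, 0, 0] = ![0, 0, -1, 1, 0])
    (h4 : T ![0, 0, 0, 1, 0] = ![-1, -1, -1, 2, 1])
    (h5 : T ![0, 0, 0, 0, 1] = ![0, -1, 0, 1, 0])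
    : (T ^ 4) (-![0, 0, 0, 0, 1]) = ![0, 0, 0, 0, 1] ∧ ![0, 0, 1, 0, 0] ∉ Set.range (fun k : ℕ => (T ^ k) ![0, 0, -1, 0, 0]) := by
  have key : ∀ a b c d e : ℤ, T ![a,b,c,d,e] = ![-a-d, -b-d-e, -c-d, a+b+c+2*d+e, b+d] := by
    intro a b c d e
    have hv : (![a,b,c,d,e] : Fin 5 → ℤ) = a • ![(1:ℤ),0,0,0,0] + b • ![0,1,0,0,0]
        + c • ![0,0,1,0,0] + d • ![0,0,0,1,0] + e • ![0,0,0,0,1] := by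
      funext i; fin_cases i <;> simp
    rw [hv]
    simp only [map_add, map_smul, h1, h2, h3, h4, h5]
    funext i; fin_cases i <;> simp <;> ring
  constructor
  · have hneg : (-![0, 0, 0, 0, 1] : Fin 5 → ℤ) = ![0, 0, 0, 0, -1] := by
      funext i; fin_cases i <;> simp
    have hp : ∀ v : Fin 5 → ℤ, (T^4) v = T (T (T (T v))) := by
      intro v; simp [pow_succ, Module.End.mul_apply]
    rw [hneg, hp]
    rw [show (![0,0,0,0,-1] : Fin 5 → ℤ) = ![(0:ℤ),0,0,0,-1] from rfl, key]
    norm_num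
    rw [show (![0,1,0,-1,0] : Fin 5 → ℤ) = ![(0:ℤ),1,0,-1,0] from rfl, key]
    norm_num
    rw [show (![1,0,1,-1,0] : Fin 5 → ℤ) = ![(1:ℤ),0,1,-1,0] from rfl, key]
    norm_num
    rw [show (![0,1,0,0,-1] : Fin 5 → ℤ) = ![(0:ℤ),1,0,0,-1] from rfl, key]
    norm_num
  · rintro ⟨k, hk⟩
    simp only at hk
    have orbit : ∀ k : ℕ, (T ^ k) ![0, 0, -1, 0, 0] ∈
        ({![0,0,-1,0,0], ![0,0,1,-1,0], ![1,1,0,-1,-1], ![0,1,1,-1,0],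
          ![1,0,0,0,0], ![-1,0,0,1,0], ![0,-1,-1,1,1], ![-1,-1,0,1,0]} :
          Set (Fin 5 → ℤ)) := by
      intro k
      induction k with
      | zero => simp
      | succ n ih =>
        rw [pow_succ', Module.End.mul_apply]
        simp only [Set.mem_insert_iff, Set.mem_singleton_iff] at ih ⊢
        rcases ih with h|h|h|h|h|h|h|h <;> rw [h, key] <;> norm_num
    have := orbit k
    rw [hk] at this
    simp only [Set.mem_insert_iff, Set.mem_singleton_iff] at this
    rcases this with h|h|h|h|h|h|h|h <;> exact absurd h (by decide)
end

section
/- T^9 is the identity map on ℤ^6, and 9 is the minimal positive exponent n with T^n = id (in particular T ≠ id and T^3 ≠ id). -/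
private lemma cv5 {α : Type*} (a b c d e f : α) : ![a,b,c,d,e,f] (5 : Fin 6) = f := rfl

theorem stmt_15 (T : Module.End ℤ (Fin 6 → ℤ))
    (h1 : T ![1, 0, 0, 0, 0, 0] = ![-1, 0, 0, 1, 0, 0])
    (h2 : T ![0, 1, 0, 0, 0, 0] = ![0, -1, 0, 1, -1, 0])
    (h3 : T ![0, 0, 1, 0, 0, 0] = ![0, 0, -1, 1, 1, 1])
    (h4 : T ![0, 0, 0, 1, 0, 0] = ![-1, -1, -1, 2, 0, 1])
    (h5 : T ![0, 0, 0, 0, 1, 0] = ![0, 1, -1, 0, 1, 1])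
    (h6 : T ![0, 0, 0, 0, 0, 1] = ![0, 0, -1, 1, 1, 0])
    : T ^ 9 = 1 ∧ ∀ n : ℕ, 0 < n → T ^ n = 1 → 9 ≤ n := by
  have key : ∀ v : Fin 6 → ℤ, T v = ![-v 0 - v 3, -v 1 - v 3 + v 4, -v 2 - v 3 - v 4 - v 5,
      v 0 + v 1 + v 2 + 2*v 3 + v 5, -v 1 + v 2 + v 4 + v 5, v 2 + v 3 + v 4] := by
    intro v
    have hv : v = v 0 • ![1, 0, 0, 0, 0, 0] + v 1 • ![0, 1, 0, 0, 0, 0] + v 2 • ![0, 0, 1, 0, 0, 0]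
        + v 3 • ![0, 0, 0, 1, 0, 0] + v 4 • ![0, 0, 0, 0, 1, 0] + v 5 • ![0, 0, 0, 0, 0, 1] := by
      funext i; fin_cases i <;> simp [cv5]
    conv_lhs => rw [hv]
    simp only [map_add, map_smul, h1, h2, h3, h4, h5, h6]
    funext i; fin_cases i <;> simp [cv5] <;> ring
  have p0_2 : T ![-1, 0, 0, 1, 0, 0] = ![0, -1, -1, 1, 0, 1] := by
    rw [key]; rfl
  have p0_3 : T ![0, -1, -1, 1, 0, 1] = ![-1, 0, -1, 1, 1, 0] := by
    rw [key]; rfl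
  have p0_4 : T ![-1, 0, -1, 1, 1, 0] = ![0, 0, -1, 0, 0, 1] := by
    rw [key]; rfl
  have p0_5 : T ![0, 0, -1, 0, 0, 1] = ![0, 0, 0, 0, 0, -1] := by
    rw [key]; rfl
  have p0_6 : T ![0, 0, 0, 0, 0, -1] = ![0, 0, 1, -1, -1, 0] := by
    rw [key]; rfl
  have p0_7 : T ![0, 0, 1, -1, -1, 0] = ![1, 0, 1, -1, 0, -1] := by
    rw [key]; rfl
  have p0_8 : T ![1, 0, 1, -1, 0, -1] = ![0, 1, 1, -1, 0, 0] := by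
    rw [key]; rfl
  have p0_9 : T ![0, 1, 1, -1, 0, 0] = ![1, 0, 0, 0, 0, 0] := by
    rw [key]; rfl
  have p1_2 : T ![0, -1, 0, 1, -1, 0] = ![-1, -1, 0, 1, 0, 0] := by
    rw [key]; rfl
  have p1_3 : T ![-1, -1, 0, 1, 0, 0] = ![0, 0, -1, 0, 1, 1] := by
    rw [key]; rfl
  have p1_4 : T ![0, 0, -1, 0, 1, 1] = ![0, 1, -1, 0, 1, 0] := by
    rw [key]; rfl
  have p1_5 : T ![0, 1, -1, 0, 1, 0] = ![0, 0, 0, 0, -1, 0] := by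
    rw [key]; rfl
  have p1_6 : T ![0, 0, 0, 0, -1, 0] = ![0, -1, 1, 0, -1, -1] := by
    rw [key]; rfl
  have p1_7 : T ![0, -1, 1, 0, -1, -1] = ![0, 0, 1, -1, 0, 0] := by
    rw [key]; rfl
  have p1_8 : T ![0, 0, 1, -1, 0, 0] = ![1, 1, 0, -1, 1, 0] := by
    rw [key]; rfl
  have p1_9 : T ![1, 1, 0, -1, 1, 0] = ![0, 1, 0, 0, 0, 0] := by
    rw [key]; rfl
  have p2_2 : T ![0, 0, -1, 1, 1, 1] = ![-1, 0, -2, 2, 1, 1] := by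
    rw [key]; rfl
  have p2_3 : T ![-1, 0, -2, 2, 1, 1] = ![-1, -1, -2, 2, 0, 1] := by
    rw [key]; rfl
  have p2_4 : T ![-1, -1, -2, 2, 0, 1] = ![-1, -1, -1, 1, 0, 0] := by
    rw [key]; rfl
  have p2_5 : T ![-1, -1, -1, 1, 0, 0] = ![0, 0, 0, -1, 0, 0] := by
    rw [key]; rfl
  have p2_6 : T ![0, 0, 0, -1, 0, 0] = ![1, 1, 1, -2, 0, -1] := by
    rw [key]; rfl
  have p2_7 : T ![1, 1, 1, -2, 0, -1] = ![1, 1, 2, -2, -1, -1] := by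
    rw [key]; rfl
  have p2_8 : T ![1, 1, 2, -2, -1, -1] = ![1, 0, 2, -1, -1, -1] := by
    rw [key]; rfl
  have p2_9 : T ![1, 0, 2, -1, -1, -1] = ![0, 0, 1, 0, 0, 0] := by
    rw [key]; rfl
  have p3_2 : T ![-1, -1, -1, 2, 0, 1] = ![-1, -1, -2, 2, 1, 1] := by
    rw [key]; rfl
  have p3_3 : T ![-1, -1, -2, 2, 1, 1] = ![-1, 0, -2, 1, 1, 1] := by
    rw [key]; rfl
  have p3_4 : T ![-1, 0, -2, 1, 1, 1] = ![0, 0, -1, 0, 0, 0] := by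
    rw [key]; rfl
  have p3_5 : T ![0, 0, -1, 0, 0, 0] = ![0, 0, 1, -1, -1, -1] := by
    rw [key]; rfl
  have p3_6 : T ![0, 0, 1, -1, -1, -1] = ![1, 0, 2, -2, -1, -1] := by
    rw [key]; rfl
  have p3_7 : T ![1, 0, 2, -2, -1, -1] = ![1, 1, 2, -2, 0, -1] := by
    rw [key]; rfl
  have p3_8 : T ![1, 1, 2, -2, 0, -1] = ![1, 1, 1, -1, 0, 0] := by
    rw [key]; rfl
  have p3_9 : T ![1, 1, 1, -1, 0, 0] = ![0, 0, 0, 1, 0, 0] := by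
    rw [key]; rfl
  have p4_2 : T ![0, 1, -1, 0, 1, 1] = ![0, 0, -1, 1, 0, 0] := by
    rw [key]; rfl
  have p4_3 : T ![0, 0, -1, 1, 0, 0] = ![-1, -1, 0, 1, -1, 0] := by
    rw [key]; rfl
  have p4_4 : T ![-1, -1, 0, 1, -1, 0] = ![0, -1, 0, 0, 0, 0] := by
    rw [key]; rfl
  have p4_5 : T ![0, -1, 0, 0, 0, 0] = ![0, 1, 0, -1, 1, 0] := by
    rw [key]; rfl
  have p4_6 : T ![0, 1, 0, -1, 1, 0] = ![1, 1, 0, -1, 0, 0] := by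
    rw [key]; rfl
  have p4_7 : T ![1, 1, 0, -1, 0, 0] = ![0, 0, 1, 0, -1, -1] := by
    rw [key]; rfl
  have p4_8 : T ![0, 0, 1, 0, -1, -1] = ![0, -1, 1, 0, -1, 0] := by
    rw [key]; rfl
  have p4_9 : T ![0, -1, 1, 0, -1, 0] = ![0, 0, 0, 0, 1, 0] := by
    rw [key]; rfl
  have p5_2 : T ![0, 0, -1, 1, 1, 0] = ![-1, 0, -1, 1, 0, 1] := by
    rw [key]; rfl
  have p5_3 : T ![-1, 0, -1, 1, 0, 1] = ![0, -1, -1, 1, 0, 0] := by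
    rw [key]; rfl
  have p5_4 : T ![0, -1, -1, 1, 0, 0] = ![-1, 0, 0, 0, 0, 0] := by
    rw [key]; rfl
  have p5_5 : T ![-1, 0, 0, 0, 0, 0] = ![1, 0, 0, -1, 0, 0] := by
    rw [key]; rfl
  have p5_6 : T ![1, 0, 0, -1, 0, 0] = ![0, 1, 1, -1, 0, -1] := by
    rw [key]; rfl
  have p5_7 : T ![0, 1, 1, -1, 0, -1] = ![1, 0, 1, -1, -1, 0] := by
    rw [key]; rfl
  have p5_8 : T ![1, 0, 1, -1, -1, 0] = ![0, 0, 1, 0, 0, -1] := by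
    rw [key]; rfl
  have p5_9 : T ![0, 0, 1, 0, 0, -1] = ![0, 0, 0, 0, 0, 1] := by
    rw [key]; rfl
  have hp9 : ∀ x : Fin 6 → ℤ, (T ^ 9) x = T (T (T (T (T (T (T (T (T x)))))))) := by
    intro x; simp [pow_succ, Module.End.mul_apply]
  have q0 : (T ^ 9) ![1, 0, 0, 0, 0, 0] = ![1, 0, 0, 0, 0, 0] := by
    rw [hp9, h1, p0_2, p0_3, p0_4, p0_5, p0_6, p0_7, p0_8, p0_9]
  have q1 : (T ^ 9) ![0, 1, 0, 0, 0, 0] = ![0, 1, 0, 0, 0, 0] := by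
    rw [hp9, h2, p1_2, p1_3, p1_4, p1_5, p1_6, p1_7, p1_8, p1_9]
  have q2 : (T ^ 9) ![0, 0, 1, 0, 0, 0] = ![0, 0, 1, 0, 0, 0] := by
    rw [hp9, h3, p2_2, p2_3, p2_4, p2_5, p2_6, p2_7, p2_8, p2_9]
  have q3 : (T ^ 9) ![0, 0, 0, 1, 0, 0] = ![0, 0, 0, 1, 0, 0] := by
    rw [hp9, h4, p3_2, p3_3, p3_4, p3_5, p3_6, p3_7, p3_8, p3_9]
  have q4 : (T ^ 9) ![0, 0, 0, 0, 1, 0] = ![0, 0, 0, 0, 1, 0] := by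
    rw [hp9, h5, p4_2, p4_3, p4_4, p4_5, p4_6, p4_7, p4_8, p4_9]
  have q5 : (T ^ 9) ![0, 0, 0, 0, 0, 1] = ![0, 0, 0, 0, 0, 1] := by
    rw [hp9, h6, p5_2, p5_3, p5_4, p5_5, p5_6, p5_7, p5_8, p5_9]
  have h9 : T ^ 9 = 1 := by
    apply LinearMap.ext; intro v
    have hv : v = v 0 • ![1, 0, 0, 0, 0, 0] + v 1 • ![0, 1, 0, 0, 0, 0] + v 2 • ![0, 0, 1, 0, 0, 0]
        + v 3 • ![0, 0, 0, 1, 0, 0] + v 4 • ![0, 0, 0, 0, 1, 0] + v 5 • ![0, 0, 0, 0, 0, 1] := by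
      funext i; fin_cases i <;> simp [cv5]
    conv_lhs => rw [hv]
    simp only [map_add, map_smul, q0, q1, q2, q3, q4, q5, Module.End.one_apply]
    exact hv.symm
  refine ⟨h9, fun n hn hTn => ?_⟩
  by_contra hlt
  push_neg at hlt
  have hd9 : orderOf T ∣ 9 := orderOf_dvd_of_pow_eq_one h9
  have hdn : orderOf T ∣ n := orderOf_dvd_of_pow_eq_one hTn
  have hd3 : orderOf T ∣ 3 := by
    have hg : orderOf T ∣ Nat.gcd n 9 := Nat.dvd_gcd hdn hd9
    interval_cases n <;> exact hg.trans (by decide)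
  have h3e : T ^ 3 = 1 := orderOf_dvd_iff_pow_eq_one.mp hd3
  have hp3 : ∀ x : Fin 6 → ℤ, (T ^ 3) x = T (T (T x)) := by
    intro x; simp [pow_succ, Module.End.mul_apply]
  have hc : (T ^ 3) ![1, 0, 0, 0, 0, 0] = ![-1, 0, -1, 1, 1, 0] := by
    rw [hp3, h1, p0_2, p0_3]
  rw [h3e] at hc
  have := congrFun hc 0
  simp [Matrix.cons_val_zero] at this
end

section
/- For v = (0,0,0,0,0,-1), the vector -v does not belong to the orbit {T^k(v) : k ∈ ℕ} of v under T; i.e. this semi-Coxeter orbit of E6(a1) is not self-opposite. -/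
theorem cv5_aux (a b c d e f : ℤ) : ![a,b,c,d,e,f] (5 : Fin 6) = f := rfl

theorem stmt_17 (T : Module.End ℤ (Fin 6 → ℤ))
    (h1 : T ![1, 0, 0, 0, 0, 0] = ![-1, 0, 0, 1, 0, 0])
    (h2 : T ![0, 1, 0, 0, 0, 0] = ![0, -1, 0, 1, -1, 0])
    (h3 : T ![0, 0, 1, 0, 0, 0] = ![0, 0, -1, 1, 1, 1])
    (h4 : T ![0, 0, 0, 1, 0, 0] = ![-1, -1, -1, 2, 0, 1])
    (h5 : T ![0, 0, 0, 0, 1, 0] = ![0, 1, -1, 0, 1, 1])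
    (h6 : T ![0, 0, 0, 0, 0, 1] = ![0, 0, -1, 1, 1, 0])
    : ![0, 0, 0, 0, 0, 1] ∉ Set.range (fun k : ℕ => (T ^ k) ![0, 0, 0, 0, 0, -1]) := by
  have decomp : ∀ a b c d e f : ℤ, (![a, b, c, d, e, f] : Fin 6 → ℤ) =
      a • ![1,0,0,0,0,0] + b • ![0,1,0,0,0,0] + c • ![0,0,1,0,0,0] +
      d • ![0,0,0,1,0,0] + e • ![0,0,0,0,1,0] + f • ![0,0,0,0,0,1] := by
    intro a b c d e f
    funext i
    fin_cases i <;> simp [cv5_aux]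
  have Tgen : ∀ a b c d e f : ℤ, T ![a, b, c, d, e, f] =
      ![-a-d, -b-d+e, -c-d-e-f, a+b+c+2*d+f, -b+c+e+f, c+d+e] := by
    intro a b c d e f
    rw [decomp, map_add, map_add, map_add, map_add, map_add,
      map_smul, map_smul, map_smul, map_smul, map_smul, map_smul,
      h1, h2, h3, h4, h5, h6]
    funext i
    fin_cases i <;> simp [cv5_aux] <;> ring
  -- orbit
  have s0 : T ![0,0,0,0,0,-1] = ![0,0,1,-1,-1,0] := by rw [Tgen]; norm_num
  have s1 : T ![0,0,1,-1,-1,0] = ![1,0,1,-1,0,-1] := by rw [Tgen]; norm_num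
  have s2 : T ![1,0,1,-1,0,-1] = ![0,1,1,-1,0,0] := by rw [Tgen]; norm_num
  have s3 : T ![0,1,1,-1,0,0] = ![1,0,0,0,0,0] := by rw [Tgen]; norm_num
  have s4 : T ![1,0,0,0,0,0] = ![-1,0,0,1,0,0] := h1
  have s5 : T ![-1,0,0,1,0,0] = ![0,-1,-1,1,0,1] := by rw [Tgen]; norm_num
  have s6 : T ![0,-1,-1,1,0,1] = ![-1,0,-1,1,1,0] := by rw [Tgen]; norm_num
  have s7 : T ![-1,0,-1,1,1,0] = ![0,0,-1,0,0,1] := by rw [Tgen]; norm_num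
  have s8 : T ![0,0,-1,0,0,1] = ![0,0,0,0,0,-1] := by rw [Tgen]; norm_num
  have key : ∀ k : ℕ, (T ^ k) ![0,0,0,0,0,-1] ∈
      ({![0,0,0,0,0,-1], ![0,0,1,-1,-1,0], ![1,0,1,-1,0,-1], ![0,1,1,-1,0,0],
        ![1,0,0,0,0,0], ![-1,0,0,1,0,0], ![0,-1,-1,1,0,1], ![-1,0,-1,1,1,0],
        ![0,0,-1,0,0,1]} : Set (Fin 6 → ℤ)) := by
    intro k
    induction k with
    | zero => simp
    | succ n ih =>
      rw [pow_succ', Module.End.mul_apply]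
      rcases ih with h|h|h|h|h|h|h|h|h <;> rw [h]
      · rw [s0]; right; left; rfl
      · rw [s1]; right; right; left; rfl
      · rw [s2]; right; right; right; left; rfl
      · rw [s3]; right; right; right; right; left; rfl
      · rw [s4]; right; right; right; right; right; left; rfl
      · rw [s5]; right; right; right; right; right; right; left; rfl
      · rw [s6]; right; right; right; right; right; right; right; left; rfl
      · rw [s7]; right; right; right; right; right; right; right; right; rfl
      · rw [s8]; left; rfl
  rintro ⟨k, hk⟩
  have hk' : (T ^ k) ![0,0,0,0,0,-1] = ![0, 0, 0, 0, 0, 1] := hk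
  have := key k
  rw [hk'] at this
  rcases this with h|h|h|h|h|h|h|h|h
  · have := congrFun h 5; simp [cv5_aux] at this
  · have := congrFun h 2; simp at this
  · have := congrFun h 0; simp at this
  · have := congrFun h 1; simp at this
  · have := congrFun h 0; simp at this
  · have := congrFun h 0; simp at this
  · have := congrFun h 1; simp at this
  · have := congrFun h 0; simp at this
  · have := congrFun h 2; simp at this
end

section
/- T^12 is the identity map on ℤ^6. -/
set_option maxHeartbeats 1000000 in
theorem stmt_18 (T : Module.End ℤ (Fin 6 → ℤ))
    (h1 : T ![1, 0, 0, 0, 0, 0] = ![-1, 0, 0, 1, 1, 0])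
    (h2 : T ![0, 1, 0, 0, 0, 0] = ![0, -1, 0, 1, 0, 1])
    (h3 : T ![0, 0, 1, 0, 0, 0] = ![0, 0, -1, 1, 0, 0])
    (h4 : T ![0, 0, 0, 1, 0, 0] = ![-1, -1, -1, 2, 1, 1])
    (h5 : T ![0, 0, 0, 0, 1, 0] = ![-1, 0, 0, 1, 0, 0])
    (h6 : T ![0, 0, 0, 0, 0, 1] = ![0, -1, 0, 1, 0, 0])
    : T ^ 12 = 1 := by
  have step : ∀ a b c d e f : ℤ, T ![a, b, c, d, e, f] =
      ![-a - d - e, -b - d - f, -c - d, a + b + c + 2*d + e + f, a + d, b + d] := by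
    intro a b c d e f
    have hv : (![a, b, c, d, e, f] : Fin 6 → ℤ) =
        a • ![1, 0, 0, 0, 0, 0] + b • ![0, 1, 0, 0, 0, 0] + c • ![0, 0, 1, 0, 0, 0]
        + d • ![0, 0, 0, 1, 0, 0] + e • ![0, 0, 0, 0, 1, 0] + f • ![0, 0, 0, 0, 0, 1] := by
      funext i; fin_cases i <;> simp [show (5:Fin 6) = Fin.succ 4 from rfl, Matrix.cons_val_succ]
    rw [hv, map_add, map_add, map_add, map_add, map_add,
      map_smul, map_smul, map_smul, map_smul, map_smul, map_smul,
      h1, h2, h3, h4, h5, h6]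
    funext i; fin_cases i <;> simp [show (5:Fin 6) = Fin.succ 4 from rfl, Matrix.cons_val_succ] <;> ring
  apply LinearMap.ext
  intro v
  have hv : v = ![v 0, v 1, v 2, v 3, v 4, v 5] := by
    funext i; fin_cases i <;> rfl
  show (T^12) v = v
  have q1 : T (![v 0, v 1, v 2, v 3, v 4, v 5]) = ![-v 0 - v 3 - v 4, -v 1 - v 3 - v 5, -v 2 - v 3, v 0 + v 1 + v 2 + 2*v 3 + v 4 + v 5, v 0 + v 3, v 1 + v 3] := by
    rw [step]; try (funext i; fin_cases i <;> simp [show (5:Fin 6) = Fin.succ 4 from rfl, Matrix.cons_val_succ] <;> ring)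
  have q2 : T (![-v 0 - v 3 - v 4, -v 1 - v 3 - v 5, -v 2 - v 3, v 0 + v 1 + v 2 + 2*v 3 + v 4 + v 5, v 0 + v 3, v 1 + v 3]) = ![-v 0 - v 1 - v 2 - 2*v 3 - v 5, -v 0 - v 1 - v 2 - 2*v 3 - v 4, -v 0 - v 1 - v 3 - v 4 - v 5, 2*v 0 + 2*v 1 + v 2 + 3*v 3 + v 4 + v 5, v 1 + v 2 + v 3 + v 5, v 0 + v 2 + v 3 + v 4] := by
    rw [step]; try (funext i; fin_cases i <;> simp [show (5:Fin 6) = Fin.succ 4 from rfl, Matrix.cons_val_succ] <;> ring)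
  have q3 : T (![-v 0 - v 1 - v 2 - 2*v 3 - v 5, -v 0 - v 1 - v 2 - 2*v 3 - v 4, -v 0 - v 1 - v 3 - v 4 - v 5, 2*v 0 + 2*v 1 + v 2 + 3*v 3 + v 4 + v 5, v 1 + v 2 + v 3 + v 5, v 0 + v 2 + v 3 + v 4]) = ![-v 0 - 2*v 1 - v 2 - 2*v 3 - v 4 - v 5, -2*v 0 - v 1 - v 2 - 2*v 3 - v 4 - v 5, -v 0 - v 1 - v 2 - 2*v 3, 2*v 0 + 2*v 1 + 2*v 2 + 3*v 3 + v 4 + v 5, v 0 + v 1 + v 3 + v 4, v 0 + v 1 + v 3 + v 5] := by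
    rw [step]; try (funext i; fin_cases i <;> simp [show (5:Fin 6) = Fin.succ 4 from rfl, Matrix.cons_val_succ] <;> ring)
  have q4 : T (![-v 0 - 2*v 1 - v 2 - 2*v 3 - v 4 - v 5, -2*v 0 - v 1 - v 2 - 2*v 3 - v 4 - v 5, -v 0 - v 1 - v 2 - 2*v 3, 2*v 0 + 2*v 1 + 2*v 2 + 3*v 3 + v 4 + v 5, v 0 + v 1 + v 3 + v 4, v 0 + v 1 + v 3 + v 5]) = ![-2*v 0 - v 1 - v 2 - 2*v 3 - v 4, -v 0 - 2*v 1 - v 2 - 2*v 3 - v 5, -v 0 - v 1 - v 2 - v 3 - v 4 - v 5, 2*v 0 + 2*v 1 + v 2 + 2*v 3 + v 4 + v 5, v 0 + v 2 + v 3, v 1 + v 2 + v 3] := by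
    rw [step]; try (funext i; fin_cases i <;> simp [show (5:Fin 6) = Fin.succ 4 from rfl, Matrix.cons_val_succ] <;> ring)
  have q5 : T (![-2*v 0 - v 1 - v 2 - 2*v 3 - v 4, -v 0 - 2*v 1 - v 2 - 2*v 3 - v 5, -v 0 - v 1 - v 2 - v 3 - v 4 - v 5, 2*v 0 + 2*v 1 + v 2 + 2*v 3 + v 4 + v 5, v 0 + v 2 + v 3, v 1 + v 2 + v 3]) = ![-v 0 - v 1 - v 2 - v 3 - v 5, -v 0 - v 1 - v 2 - v 3 - v 4, -v 0 - v 1 - v 3, v 0 + v 1 + v 2 + v 3, v 1 + v 5, v 0 + v 4] := by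
    rw [step]; try (funext i; fin_cases i <;> simp [show (5:Fin 6) = Fin.succ 4 from rfl, Matrix.cons_val_succ] <;> ring)
  have q6 : T (![-v 0 - v 1 - v 2 - v 3 - v 5, -v 0 - v 1 - v 2 - v 3 - v 4, -v 0 - v 1 - v 3, v 0 + v 1 + v 2 + v 3, v 1 + v 5, v 0 + v 4]) = ![-v 1, -v 0, -v 2, -v 3, -v 5, -v 4] := by
    rw [step]; try (funext i; fin_cases i <;> simp [show (5:Fin 6) = Fin.succ 4 from rfl, Matrix.cons_val_succ] <;> ring)
  have q7 : T (![-v 1, -v 0, -v 2, -v 3, -v 5, -v 4]) = ![v 1 + v 3 + v 5, v 0 + v 3 + v 4, v 2 + v 3, -v 0 - v 1 - v 2 - 2*v 3 - v 4 - v 5, -v 1 - v 3, -v 0 - v 3] := by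
    rw [step]; try (funext i; fin_cases i <;> simp [show (5:Fin 6) = Fin.succ 4 from rfl, Matrix.cons_val_succ] <;> ring)
  have q8 : T (![v 1 + v 3 + v 5, v 0 + v 3 + v 4, v 2 + v 3, -v 0 - v 1 - v 2 - 2*v 3 - v 4 - v 5, -v 1 - v 3, -v 0 - v 3]) = ![v 0 + v 1 + v 2 + 2*v 3 + v 4, v 0 + v 1 + v 2 + 2*v 3 + v 5, v 0 + v 1 + v 3 + v 4 + v 5, -2*v 0 - 2*v 1 - v 2 - 3*v 3 - v 4 - v 5, -v 0 - v 2 - v 3 - v 4, -v 1 - v 2 - v 3 - v 5] := by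
    rw [step]; try (funext i; fin_cases i <;> simp [show (5:Fin 6) = Fin.succ 4 from rfl, Matrix.cons_val_succ] <;> ring)
  have q9 : T (![v 0 + v 1 + v 2 + 2*v 3 + v 4, v 0 + v 1 + v 2 + 2*v 3 + v 5, v 0 + v 1 + v 3 + v 4 + v 5, -2*v 0 - 2*v 1 - v 2 - 3*v 3 - v 4 - v 5, -v 0 - v 2 - v 3 - v 4, -v 1 - v 2 - v 3 - v 5]) = ![2*v 0 + v 1 + v 2 + 2*v 3 + v 4 + v 5, v 0 + 2*v 1 + v 2 + 2*v 3 + v 4 + v 5, v 0 + v 1 + v 2 + 2*v 3, -2*v 0 - 2*v 1 - 2*v 2 - 3*v 3 - v 4 - v 5, -v 0 - v 1 - v 3 - v 5, -v 0 - v 1 - v 3 - v 4] := by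
    rw [step]; try (funext i; fin_cases i <;> simp [show (5:Fin 6) = Fin.succ 4 from rfl, Matrix.cons_val_succ] <;> ring)
  have q10 : T (![2*v 0 + v 1 + v 2 + 2*v 3 + v 4 + v 5, v 0 + 2*v 1 + v 2 + 2*v 3 + v 4 + v 5, v 0 + v 1 + v 2 + 2*v 3, -2*v 0 - 2*v 1 - 2*v 2 - 3*v 3 - v 4 - v 5, -v 0 - v 1 - v 3 - v 5, -v 0 - v 1 - v 3 - v 4]) = ![v 0 + 2*v 1 + v 2 + 2*v 3 + v 5, 2*v 0 + v 1 + v 2 + 2*v 3 + v 4, v 0 + v 1 + v 2 + v 3 + v 4 + v 5, -2*v 0 - 2*v 1 - v 2 - 2*v 3 - v 4 - v 5, -v 1 - v 2 - v 3, -v 0 - v 2 - v 3] := by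
    rw [step]; try (funext i; fin_cases i <;> simp [show (5:Fin 6) = Fin.succ 4 from rfl, Matrix.cons_val_succ] <;> ring)
  have q11 : T (![v 0 + 2*v 1 + v 2 + 2*v 3 + v 5, 2*v 0 + v 1 + v 2 + 2*v 3 + v 4, v 0 + v 1 + v 2 + v 3 + v 4 + v 5, -2*v 0 - 2*v 1 - v 2 - 2*v 3 - v 4 - v 5, -v 1 - v 2 - v 3, -v 0 - v 2 - v 3]) = ![v 0 + v 1 + v 2 + v 3 + v 4, v 0 + v 1 + v 2 + v 3 + v 5, v 0 + v 1 + v 3, -v 0 - v 1 - v 2 - v 3, -v 0 - v 4, -v 1 - v 5] := by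
    rw [step]; try (funext i; fin_cases i <;> simp [show (5:Fin 6) = Fin.succ 4 from rfl, Matrix.cons_val_succ] <;> ring)
  have q12 : T (![v 0 + v 1 + v 2 + v 3 + v 4, v 0 + v 1 + v 2 + v 3 + v 5, v 0 + v 1 + v 3, -v 0 - v 1 - v 2 - v 3, -v 0 - v 4, -v 1 - v 5]) = ![v 0, v 1, v 2, v 3, v 4, v 5] := by
    rw [step]; try (funext i; fin_cases i <;> simp [show (5:Fin 6) = Fin.succ 4 from rfl, Matrix.cons_val_succ] <;> ring)
  calc (T^12) v = T (T (T (T (T (T (T (T (T (T (T (T v))))))))))) := by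
        simp only [pow_succ, pow_zero, one_mul, Module.End.mul_apply]
    _ = v := by rw [hv, q1, q2, q3, q4, q5, q6, q7, q8, q9, q10, q11, q12]
end
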